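/- (One-step descent of the value function.) Suppose 𝒬 ⊆ ℝ^{3N_y+2N_v} is a proper cone satisfying the Bellman equation, that the minimax interchange sup_{q∈𝒬} inf_{ν:(ξ,ν)∈𝒰} qᵀ(w,ξ,ν) = inf_{ν:(ξ,ν)∈𝒰} sup_{q∈𝒬} qᵀ(w,ξ,ν) holds for all w ∈ ℝ^{2N_y+N_v} and ξ ∈ 𝒳, and that for every (z,y) the infimum of V_𝒬(z,y,v) over {v:(y,v)∈𝒰} is attained. Let (y_t),(v_t) be an admissible trajectory under the feedback law v_t := argmin_{v:(y_t,v)∈𝒰} V_𝒬(z_t,y_t,v), where z_t := Σ_{τ<t}(y_τ,v_τ,y_{τ+1}). Then for every t, V_𝒬(z_{t+1}, y_{t+1}, v_{t+1}) ≤ V_𝒬(z_t, y_t, v_t). -/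

import Mathlib

open scoped BigOperators

noncomputable section

/-- Vectors in `ℝ^N`. -/
abbrev Vec (N : ℕ) := Fin N → ℝ

/-- Euclidean inner product on `ℝ^N`. -/
def dotR {N : ℕ} (a b : Vec N) : ℝ := ∑ i, a i * b i

/-- The space `ℝ^{2N_y+N_v}`, represented as triples `(ℝ^{N_y}, ℝ^{N_v}, ℝ^{N_y})`. -/
abbrev WSp (Ny Nv : ℕ) := Vec Ny × Vec Nv × Vec Ny

/-- The space `ℝ^{3N_y+2N_v}`, represented as `(ℝ^{2N_y+N_v}, ℝ^{N_y}, ℝ^{N_v})`. -/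
abbrev QSp (Ny Nv : ℕ) := WSp Ny Nv × Vec Ny × Vec Nv

/-- `sᵀ (y, v, y⁺)` for `s ∈ ℝ^{2N_y+N_v}`. -/
def pairW {Ny Nv : ℕ} (s w : WSp Ny Nv) : ℝ :=
  dotR s.1 w.1 + dotR s.2.1 w.2.1 + dotR s.2.2 w.2.2

/-- `qᵀ (z, y, v)` for `q ∈ ℝ^{3N_y+2N_v}`. -/
def pairQ {Ny Nv : ℕ} (q : QSp Ny Nv) (z : WSp Ny Nv) (y : Vec Ny) (v : Vec Nv) : ℝ :=
  pairW q.1 z + dotR q.2.1 y + dotR q.2.2 v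

/-- A proper cone: closed, convex, closed under nonnegative scaling and
pointed (`K ∩ -K = {0}`). -/
def IsProperCone {E : Type*} [AddCommGroup E] [Module ℝ E] [TopologicalSpace E]
    (K : Set E) : Prop :=
  IsClosed K ∧ Convex ℝ K ∧ (∀ c : ℝ, 0 ≤ c → ∀ x ∈ K, c • x ∈ K) ∧ K ∩ (-K) = {0}

/-- The value function `V_𝒬(z,y,v) = sup_{q ∈ 𝒬} qᵀ(z,y,v)`, valued in the extended reals. -/
def valFun {Ny Nv : ℕ} (Q : Set (QSp Ny Nv)) (z : WSp Ny Nv) (y : Vec Ny) (v : Vec Nv) :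
    EReal :=
  ⨆ q ∈ Q, (pairQ q z y v : EReal)

/-- The right-hand side of the Bellman equation:
`sup_{q∈𝒬} sup_{ξ : (y,v,ξ)∈𝒱} inf_{ν : (ξ,ν)∈𝒰} qᵀ(z+(y,v,ξ), ξ, ν)`. -/
def bellmanRHS {Ny Nv : ℕ} (U : Set (Vec Ny × Vec Nv)) (V : Set (WSp Ny Nv))
    (Q : Set (QSp Ny Nv)) (z : WSp Ny Nv) (y : Vec Ny) (v : Vec Nv) : EReal :=
  ⨆ q ∈ Q, ⨆ ξ : Vec Ny, ⨆ _ : (y, v, ξ) ∈ V, ⨅ ν : Vec Nv, ⨅ _ : (ξ, ν) ∈ U,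
    (pairQ q (z + (y, v, ξ)) ξ ν : EReal)

/-- `𝒬` satisfies the Bellman equation. -/
def SatisfiesBellman {Ny Nv : ℕ} (U : Set (Vec Ny × Vec Nv)) (V : Set (WSp Ny Nv))
    (Q : Set (QSp Ny Nv)) : Prop :=
  ∀ z y v, valFun Q z y v = bellmanRHS U V Q z y v

/-- For fixed `q`, the map `(z,y,v) ↦ sup_{ξ:(y,v,ξ)∈𝒱} inf_{ν:(ξ,ν)∈𝒰} qᵀ(z+(y,v,ξ),ξ,ν)`. -/
def supInfMap {Ny Nv : ℕ} (U : Set (Vec Ny × Vec Nv)) (V : Set (WSp Ny Nv))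
    (q : QSp Ny Nv) (z : WSp Ny Nv) (y : Vec Ny) (v : Vec Nv) : EReal :=
  ⨆ ξ : Vec Ny, ⨆ _ : (y, v, ξ) ∈ V, ⨅ ν : Vec Nv, ⨅ _ : (ξ, ν) ∈ U,
    (pairQ q (z + (y, v, ξ)) ξ ν : EReal)

/-- The linearity hypothesis on `(𝒰,𝒱)`: for every `q`, the map `supInfMap U V q`
is a linear function of `(z,y,v)` wherever its values are finite. -/
def LinearityHyp {Ny Nv : ℕ} (U : Set (Vec Ny × Vec Nv)) (V : Set (WSp Ny Nv)) : Prop :=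
  ∀ q : QSp Ny Nv, ∃ L : QSp Ny Nv →ₗ[ℝ] ℝ, ∀ z y v,
    supInfMap U V q z y v ≠ ⊤ → supInfMap U V q z y v ≠ ⊥ →
      supInfMap U V q z y v = (L (z, y, v) : EReal)

/-- A causal control law: at each time `t` it maps the history
`(y_0,…,y_t, v_0,…,v_{t-1})` to a control `v_t`. -/
abbrev ControlLaw (Ny Nv : ℕ) := (t : ℕ) → (Fin (t + 1) → Vec Ny) → (Fin t → Vec Nv) → Vec Nv

/-- An admissible trajectory under the causal control law `μ`. -/
def IsAdmissible {Ny Nv : ℕ} (X : Set (Vec Ny)) (U : Set (Vec Ny × Vec Nv))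
    (V : Set (WSp Ny Nv)) (μ : ControlLaw Ny Nv) (y : ℕ → Vec Ny) (v : ℕ → Vec Nv) : Prop :=
  y 0 = 0 ∧ (∀ t, y t ∈ X) ∧
  (∀ t, v t = μ t (fun i => y i.val) (fun i => v i.val)) ∧
  (∀ t, (y t, v t) ∈ U) ∧ (∀ t, (y t, v t, y (t + 1)) ∈ V)

/-- The control objective: `sup_{s∈𝒮} ∑_{t<T} sᵀ(y_t,v_t,y_{t+1}) ≤ 0` for every `T ≥ 1`
and every admissible trajectory. -/
def Achieves {Ny Nv : ℕ} (S : Set (WSp Ny Nv)) (X : Set (Vec Ny))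
    (U : Set (Vec Ny × Vec Nv)) (V : Set (WSp Ny Nv)) (μ : ControlLaw Ny Nv) : Prop :=
  ∀ y v, IsAdmissible X U V μ y v →
    ∀ T : ℕ, 1 ≤ T → ∀ s ∈ S, ∑ t ∈ Finset.range T, pairW s (y t, v t, y (t + 1)) ≤ 0

/-- The compressed statistic `z_t = ∑_{τ<t} (y_τ, v_τ, y_{τ+1})`. -/
def ztraj {Ny Nv : ℕ} (y : ℕ → Vec Ny) (v : ℕ → Vec Nv) (t : ℕ) : WSp Ny Nv :=
  ∑ τ ∈ Finset.range t, ((y τ, v τ, y (τ + 1)) : WSp Ny Nv)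

/-- **One-step descent of the value function.** If `𝒬` is a proper cone
satisfying the Bellman equation, the minimax interchange
`sup_{q∈𝒬} inf_{ν:(ξ,ν)∈𝒰} qᵀ(w,ξ,ν) = inf_{ν:(ξ,ν)∈𝒰} sup_{q∈𝒬} qᵀ(w,ξ,ν)`
holds for all `w` and `ξ ∈ 𝒳`, and the infimum of `V_𝒬(z,y,·)` over `{v : (y,v)∈𝒰}`
is attained (by a selection `sel`), then along every admissible trajectory generated by
the feedback law `v_t := argmin_{v:(y_t,v)∈𝒰} V_𝒬(z_t,y_t,v)` the value function is
non-increasing: `V_𝒬(z_{t+1},y_{t+1},v_{t+1}) ≤ V_𝒬(z_t,y_t,v_t)` for all `t`. -/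
theorem statement_3 (Ny Nv : ℕ) (hNy : 0 < Ny) (hNv : 0 < Nv)
    (X : Set (Vec Ny)) (U : Set (Vec Ny × Vec Nv)) (V : Set (WSp Ny Nv))
    (hX : IsProperCone X) (hU : IsProperCone U) (hV : IsProperCone V)
    (hfeas : ∀ y ∈ X, ∃ v, (y, v) ∈ U)
    (Q : Set (QSp Ny Nv)) (hQ : IsProperCone Q)
    (hBellman : SatisfiesBellman U V Q)
    -- minimax interchange
    (hminimax : ∀ w : WSp Ny Nv, ∀ ξ ∈ X,
      (⨆ q ∈ Q, ⨅ ν : Vec Nv, ⨅ _ : (ξ, ν) ∈ U, (pairQ q w ξ ν : EReal)) =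
        ⨅ ν : Vec Nv, ⨅ _ : (ξ, ν) ∈ U, ⨆ q ∈ Q, (pairQ q w ξ ν : EReal))
    -- attainment of the infimum by a minimizing selection `sel`
    (sel : WSp Ny Nv → Vec Ny → Vec Nv)
    (hselU : ∀ z : WSp Ny Nv, ∀ y ∈ X, (y, sel z y) ∈ U)
    (hselMin : ∀ z : WSp Ny Nv, ∀ y ∈ X, ∀ v : Vec Nv, (y, v) ∈ U →
      valFun Q z y (sel z y) ≤ valFun Q z y v)
    -- an admissible trajectory generated by the feedback law
    (y : ℕ → Vec Ny) (v : ℕ → Vec Nv)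
    (hy0 : y 0 = 0) (hyX : ∀ t, y t ∈ X)
    (hfb : ∀ t, v t = sel (ztraj y v t) (y t))
    (hU' : ∀ t, (y t, v t) ∈ U) (hV' : ∀ t, (y t, v t, y (t + 1)) ∈ V) :
    ∀ t : ℕ, valFun Q (ztraj y v (t + 1)) (y (t + 1)) (v (t + 1)) ≤
      valFun Q (ztraj y v t) (y t) (v t) := by
  intro t
  set ξ := y (t + 1) with hξ
  set z' := ztraj y v (t + 1) with hz'
  have hz : z' = ztraj y v t + (y t, v t, ξ) := by
    simp [hz', ztraj, Finset.sum_range_succ, hξ]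
  have hξX : ξ ∈ X := hyX (t + 1)
  -- Step 1: value at selected control is ≤ inf over admissible controls
  have h1 : valFun Q z' ξ (v (t + 1)) ≤
      ⨅ ν : Vec Nv, ⨅ _ : (ξ, ν) ∈ U, valFun Q z' ξ ν := by
    refine le_iInf fun ν => le_iInf fun hν => ?_
    rw [hfb (t + 1)]
    exact hselMin z' ξ hξX ν hν
  -- Step 2: minimax interchange
  have h2 : (⨅ ν : Vec Nv, ⨅ _ : (ξ, ν) ∈ U, valFun Q z' ξ ν) =
      ⨆ q ∈ Q, ⨅ ν : Vec Nv, ⨅ _ : (ξ, ν) ∈ U, (pairQ q z' ξ ν : EReal) := by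
    rw [hminimax z' ξ hξX]
    rfl
  -- Step 3: this is ≤ bellmanRHS at time t
  have h3 : (⨆ q ∈ Q, ⨅ ν : Vec Nv, ⨅ _ : (ξ, ν) ∈ U, (pairQ q z' ξ ν : EReal)) ≤
      bellmanRHS U V Q (ztraj y v t) (y t) (v t) := by
    refine iSup₂_le fun q hq => ?_
    have : (⨅ ν : Vec Nv, ⨅ _ : (ξ, ν) ∈ U, (pairQ q z' ξ ν : EReal)) =
        ⨅ ν : Vec Nv, ⨅ _ : (ξ, ν) ∈ U,
          (pairQ q (ztraj y v t + (y t, v t, ξ)) ξ ν : EReal) := by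
      rw [← hz]
    rw [this]
    calc (⨅ ν : Vec Nv, ⨅ _ : (ξ, ν) ∈ U,
            (pairQ q (ztraj y v t + (y t, v t, ξ)) ξ ν : EReal))
        ≤ ⨆ ξ' : Vec Ny, ⨆ _ : (y t, v t, ξ') ∈ V, ⨅ ν : Vec Nv, ⨅ _ : (ξ', ν) ∈ U,
            (pairQ q (ztraj y v t + (y t, v t, ξ')) ξ' ν : EReal) :=
          le_iSup₂ (f := fun ξ' (_ : (y t, v t, ξ') ∈ V) =>
            ⨅ ν : Vec Nv, ⨅ _ : (ξ', ν) ∈ U,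
              (pairQ q (ztraj y v t + (y t, v t, ξ')) ξ' ν : EReal)) ξ (hV' t)
      _ ≤ bellmanRHS U V Q (ztraj y v t) (y t) (v t) :=
          le_iSup₂ (f := fun q (_ : q ∈ Q) =>
            ⨆ ξ' : Vec Ny, ⨆ _ : (y t, v t, ξ') ∈ V, ⨅ ν : Vec Nv, ⨅ _ : (ξ', ν) ∈ U,
              (pairQ q (ztraj y v t + (y t, v t, ξ')) ξ' ν : EReal)) q hq
  calc valFun Q z' ξ (v (t + 1)) ≤ _ := h1
    _ = _ := h2
    _ ≤ bellmanRHS U V Q (ztraj y v t) (y t) (v t) := h3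
    _ = valFun Q (ztraj y v t) (y t) (v t) := (hBellman _ _ _).symm
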